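/- arXiv:1507.03491 — 3 statements merged into one kernel-verified Lean document; each statement's English description precedes it below -/
import Mathlib

section
/- For M₀ > 0 let W̃(x) = ½(erf(x + M₀/2) − erf(x − M₀/2)). Then for every real λ, |∫_ℝ W̃(x) e^{-iλx} dx| ≤ M₀ e^{-λ²/4}. In particular the Fourier transform of W̃ decays superalgebraically. -/
open MeasureTheory Real

noncomputable def erf (x : ℝ) : ℝ :=
  (2 / Real.sqrt π) * ∫ t in (0:ℝ)..x, Real.exp (-t ^ 2)

/-!
Writing `erf(x + M₀/2) − erf(x − M₀/2)` as an integral of `e^{-t²}` over `[x − M₀/2, x + M₀/2]`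
exhibits `W̃ = π^{-1/2} (𝟙_{[-M₀/2, M₀/2]} ⋆ e^{-x²})`. The Fourier transform turns the
convolution into a product: the transform of the indicator is bounded by the length `M₀` of the
interval and that of the Gaussian is `√π e^{-λ²/4}`. Superalgebraic decay follows from
`(1 + |λ|)ⁿ ≤ n! e^{1 + |λ|}` and `1 + |λ| − λ²/4 ≤ 2`.
-/

open Complex (I)
open Convolution FourierTransform ContinuousLinearMap Nat

/-- The Fourier transform in the angular-frequency convention `f̂(λ) = ∫ f(x) e^{-iλx} dx`;
Mathlib's `𝓕` uses `e^{-2πixξ}`, so `f̂(λ) = 𝓕 f (λ / 2π)`. -/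
noncomputable def angularFourier (f : ℝ → ℂ) (lam : ℝ) : ℂ :=
  ∫ x, f x * Complex.exp (-(I * lam * x))

theorem angularFourier_eq_fourier (f : ℝ → ℂ) (lam : ℝ) :
    angularFourier f lam = 𝓕 f (lam / (2 * π)) := by
  rw [Real.fourier_real_eq_integral_exp_smul, angularFourier]
  congr 1 with x
  rw [smul_eq_mul, mul_comm]
  congr 2
  push_cast
  field_simp

theorem angularFourier_convolution {f g : ℝ → ℂ} (hf : Integrable f) (hg : Integrable g)
    (lam : ℝ) :
    angularFourier (f ⋆[mul ℂ ℂ] g) lam = angularFourier f lam * angularFourier g lam := by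
  simp only [angularFourier_eq_fourier, Real.fourier_mul_convolution_eq hf hg]

theorem angularFourier_const_mul (c : ℂ) (f : ℝ → ℂ) (lam : ℝ) :
    angularFourier (fun x => c * f x) lam = c * angularFourier f lam := by
  simp only [angularFourier, mul_assoc, integral_const_mul]

theorem norm_angularFourier_le (f : ℝ → ℂ) (lam : ℝ) :
    ‖angularFourier f lam‖ ≤ ∫ x, ‖f x‖ := by
  refine (norm_integral_le_integral_norm _).trans_eq ?_
  congr 1 with x
  rw [norm_mul, Complex.norm_exp, mul_right_eq_self₀]
  left
  simp

theorem angularFourier_gaussian (lam : ℝ) :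
    angularFourier (fun x => Complex.exp (-(x : ℂ) ^ 2)) lam
      = ((√π * rexp (-lam ^ 2 / 4) : ℝ) : ℂ) := by
  have h := fourierIntegral_gaussian (b := 1) (by norm_num) (-lam)
  simp only [div_one, one_mul, neg_mul, mul_one] at h
  rw [angularFourier]
  convert h using 1
  · congr 1 with x
    rw [mul_comm]
    ring_nf
  · rw [Complex.ofReal_mul, Complex.ofReal_exp, Real.sqrt_eq_rpow,
      Complex.ofReal_cpow Real.pi_pos.le]
    push_cast
    ring_nf

theorem integrable_cexp_neg_sq :
    Integrable (fun x : ℝ => Complex.exp (-(x : ℂ) ^ 2)) := by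
  simpa using integrable_cexp_quadratic (b := 1) (by norm_num) 0 0

theorem norm_angularFourier_indicator_Icc_le (a b : ℝ) (lam : ℝ) (hab : a ≤ b) :
    ‖angularFourier ((Set.Icc a b).indicator 1) lam‖ ≤ b - a := by
  refine (norm_angularFourier_le _ _).trans_eq ?_
  simp [norm_indicator_eq_indicator_norm, integral_indicator_const, hab]

theorem erf_sub_erf_eq_integral (a b : ℝ) :
    erf b - erf a = 2 / √π * ∫ t in a..b, rexp (-t ^ 2) := by
  have hint (c d : ℝ) : IntervalIntegrable (fun t => rexp (-t ^ 2)) volume c d := by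
    simpa using (integrable_exp_neg_mul_sq one_pos).intervalIntegrable
  rw [erf, erf, ← mul_sub, intervalIntegral.integral_interval_sub_left (hint _ _) (hint _ _)]

theorem erfWindow_eq_convolution {M : ℝ} (hM : 0 ≤ M) (x : ℝ) :
    (((1 / 2) * (erf (x + M / 2) - erf (x - M / 2)) : ℝ) : ℂ)
      = ((√π)⁻¹ : ℝ) * ((Set.Icc (-(M / 2)) (M / 2)).indicator 1 ⋆[mul ℂ ℂ]
          fun t : ℝ => Complex.exp (-(t : ℂ) ^ 2)) x := by
  have hshift : ∫ t in -(M / 2)..M / 2, rexp (-(x - t) ^ 2)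
      = ∫ t in x - M / 2..x + M / 2, rexp (-t ^ 2) := by
    simpa [sub_neg_eq_add] using
      intervalIntegral.integral_comp_sub_left (fun t => rexp (-t ^ 2)) x
        (a := -(M / 2)) (b := M / 2)
  have hconv : ((Set.Icc (-(M / 2)) (M / 2)).indicator 1 ⋆[mul ℂ ℂ]
      fun t : ℝ => Complex.exp (-(t : ℂ) ^ 2)) x
        = ((∫ t in -(M / 2)..M / 2, rexp (-(x - t) ^ 2) : ℝ) : ℂ) := by
    rw [convolution_def, intervalIntegral.integral_of_le (by linarith),
      ← integral_Icc_eq_integral_Ioc, ← integral_complex_ofReal,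
      ← integral_indicator measurableSet_Icc]
    congr 1 with t
    by_cases ht : t ∈ Set.Icc (-(M / 2)) (M / 2) <;> simp [ht]
  rw [hconv, erf_sub_erf_eq_integral, ← hshift]
  have : √π ≠ 0 := (Real.sqrt_pos.2 Real.pi_pos).ne'
  push_cast
  field_simp

theorem norm_angularFourier_erfWindow_le {M : ℝ} (hM : 0 ≤ M) (lam : ℝ) :
    ‖angularFourier (fun x => (((1 / 2) * (erf (x + M / 2) - erf (x - M / 2)) : ℝ) : ℂ)) lam‖
      ≤ M * rexp (-lam ^ 2 / 4) := by
  have hind : Integrable ((Set.Icc (-(M / 2)) (M / 2)).indicator (1 : ℝ → ℂ)) :=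
    (integrable_indicator_iff measurableSet_Icc).2 (integrableOn_const measure_Icc_lt_top.ne)
  have hπ : 0 < √π := Real.sqrt_pos.2 Real.pi_pos
  simp_rw [erfWindow_eq_convolution hM]
  rw [angularFourier_const_mul, angularFourier_convolution hind integrable_cexp_neg_sq,
    angularFourier_gaussian, norm_mul, norm_mul, Complex.norm_of_nonneg (by positivity),
    Complex.norm_of_nonneg (by positivity)]
  calc (√π)⁻¹ * (‖angularFourier ((Set.Icc (-(M / 2)) (M / 2)).indicator 1) lam‖
        * (√π * rexp (-lam ^ 2 / 4)))
      ≤ (√π)⁻¹ * ((M / 2 - -(M / 2)) * (√π * rexp (-lam ^ 2 / 4))) := by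
        gcongr
        exact norm_angularFourier_indicator_Icc_le _ _ _ (by linarith)
    _ = M * rexp (-lam ^ 2 / 4) := by field_simp; ring

theorem exp_neg_sq_div_four_le (n : ℕ) (lam : ℝ) :
    rexp (-lam ^ 2 / 4) ≤ n ! * rexp 2 * (1 + |lam|) ^ (-(n : ℝ)) := by
  have hb : 0 < 1 + |lam| := by positivity
  rw [Real.rpow_neg hb.le, Real.rpow_natCast, ← div_eq_mul_inv, le_div_iff₀ (by positivity)]
  have hpow : (1 + |lam|) ^ n ≤ n ! * rexp (1 + |lam|) := by
    have h := Real.pow_div_factorial_le_exp _ hb.le n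
    rwa [div_le_iff₀ (by positivity), mul_comm] at h
  have hexp : rexp (-lam ^ 2 / 4) * rexp (1 + |lam|) ≤ rexp 2 := by
    rw [← Real.exp_add, Real.exp_le_exp]
    nlinarith [sq_nonneg (|lam| - 2), sq_abs lam]
  calc rexp (-lam ^ 2 / 4) * (1 + |lam|) ^ n
      ≤ rexp (-lam ^ 2 / 4) * (n ! * rexp (1 + |lam|)) := by gcongr
    _ = n ! * (rexp (-lam ^ 2 / 4) * rexp (1 + |lam|)) := by ring
    _ ≤ n ! * rexp 2 := by gcongr

/-- For `M₀ > 0` and the erf window `W̃(x) = ½(erf(x + M₀/2) − erf(x − M₀/2))`,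
the Fourier transform satisfies `|∫ W̃(x) e^{-iλx} dx| ≤ M₀ e^{-λ²/4}` for every real `λ`;
in particular it decays superalgebraically. -/
theorem fourier_transform_erf_window_bound (M₀ : ℝ) (hM₀ : 0 < M₀)
    (Wt : ℝ → ℝ) (hWt : ∀ x, Wt x = (1 / 2) * (erf (x + M₀ / 2) - erf (x - M₀ / 2))) :
    (∀ lam : ℝ,
      ‖∫ x : ℝ, (Wt x : ℂ) * Complex.exp (-(Complex.I * lam * x))‖
        ≤ M₀ * Real.exp (-lam ^ 2 / 4)) ∧
    (∀ n : ℕ, ∃ C : ℝ, 0 < C ∧ ∀ lam : ℝ,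
      ‖∫ x : ℝ, (Wt x : ℂ) * Complex.exp (-(Complex.I * lam * x))‖
        ≤ C * (1 + |lam|) ^ (-(n : ℝ))) := by
  have hbound (lam : ℝ) :
      ‖angularFourier (fun x => (Wt x : ℂ)) lam‖ ≤ M₀ * rexp (-lam ^ 2 / 4) := by
    simpa only [hWt] using norm_angularFourier_erfWindow_le hM₀.le lam
  refine ⟨hbound, fun n => ⟨M₀ * (n ! * rexp 2), by positivity, fun lam => ?_⟩⟩
  rw [mul_assoc]
  exact (hbound lam).trans (mul_le_mul_of_nonneg_left (exp_neg_sq_div_four_le n lam) hM₀.le)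
end

section
/- Let k ∈ ℂ and let λ be a nonzero real number with |λ| ≥ 2|k|. Then, for the principal branch of the complex square root, Re(√(λ² − k²)) ≥ (√3/2)|λ|. -/
open Real Complex

/-- Re √z = √((‖z‖ + Re z)/2) dominates √(Re z) because ‖z‖ ≥ Re z. -/
theorem Complex.sqrt_re_le_re_cpow_inv_two (z : ℂ) : √z.re ≤ (z ^ (2⁻¹ : ℂ)).re := by
  rw [cpow_inv_two_re]
  exact Real.sqrt_le_sqrt (by linarith [re_le_norm z])

theorem Complex.re_ofReal_sq_sub_sq_ge {k : ℂ} {a : ℝ} (h : 2 * ‖k‖ ≤ |a|) :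
    3 / 4 * a ^ 2 ≤ ((a : ℂ) ^ 2 - k ^ 2).re := by
  have hk : (k ^ 2).re ≤ ‖k‖ ^ 2 := norm_pow k 2 ▸ re_le_norm (k ^ 2)
  have hre : ((a : ℂ) ^ 2 - k ^ 2).re = a ^ 2 - (k ^ 2).re := by
    rw [sub_re, ← ofReal_pow, ofReal_re]
  nlinarith [sq_abs a, norm_nonneg k]

theorem re_sqrt_sommerfeld_exponent_lower_bound_general
    (k : ℂ) (lam : ℝ) (h : 2 * ‖k‖ ≤ |lam|) :
    Real.sqrt 3 / 2 * |lam| ≤ (((lam : ℂ) ^ 2 - k ^ 2) ^ (1 / 2 : ℂ)).re := by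
  have hlhs : Real.sqrt 3 / 2 * |lam| = √(3 / 4 * lam ^ 2) := by
    rw [Real.sqrt_mul (by norm_num), Real.sqrt_sq_eq_abs, Real.sqrt_div' _ (by norm_num),
      show (4 : ℝ) = 2 ^ 2 by norm_num, Real.sqrt_sq (by norm_num)]
  rw [hlhs, one_div]
  exact (Real.sqrt_le_sqrt (re_ofReal_sq_sub_sq_ge h)).trans (sqrt_re_le_re_cpow_inv_two _)

/-- For `k ∈ ℂ` and a nonzero real `λ` with `|λ| ≥ 2|k|`, the principal branch of
the complex square root satisfies `Re √(λ² − k²) ≥ (√3/2)|λ|`. -/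
theorem re_sqrt_sommerfeld_exponent_lower_bound
    (k : ℂ) (lam : ℝ) (hlam : lam ≠ 0) (h : 2 * ‖k‖ ≤ |lam|) :
    Real.sqrt 3 / 2 * |lam| ≤ (((lam : ℂ) ^ 2 - k ^ 2) ^ (1 / 2 : ℂ)).re :=
  re_sqrt_sommerfeld_exponent_lower_bound_general k lam h
end

section
/- Let k ∈ ℂ, let d > 0, and let λ be a nonzero real number with |λ| ≥ 2|k|. Then, with √ denoting the principal branch of the complex square root, |e^{-√(λ²-k²) d} / √(λ²-k²)| ≤ (2/(√3 |λ|)) · e^{-(√3/2)|λ| d}. -/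
open Real Complex

/-!
Write `w = λ² - k²` and `s = √w`. Since `|k| ≤ |λ|/2`, `Re w ≥ λ² - |k|² ≥ (3/4) λ²`, and the
principal root satisfies `Re √w = √((|w| + Re w)/2) ≥ √(Re w)`, so `Re s ≥ (√3/2)|λ|`. Then
`|e^{-s d}/s| = e^{-d Re s}/|s| ≤ e^{-d Re s}/Re s` is bounded by its value at `Re s = (√3/2)|λ|`.
-/

namespace Complex

lemma sqrt_re_le_re_cpow_inv_two_s11 (z : ℂ) : √z.re ≤ (z ^ (2⁻¹ : ℂ)).re := by
  rw [cpow_inv_two_re]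
  exact Real.sqrt_le_sqrt (by linarith [re_le_norm z])

lemma sq_sub_norm_sq_le_re_sq_sub_sq (x : ℝ) (k : ℂ) :
    x ^ 2 - ‖k‖ ^ 2 ≤ ((x : ℂ) ^ 2 - k ^ 2).re := by
  have hk : (k ^ 2).re ≤ ‖k‖ ^ 2 := norm_pow k 2 ▸ re_le_norm (k ^ 2)
  rw [sub_re, ← ofReal_pow, ofReal_re]
  linarith

lemma norm_exp_neg_mul_div_le {s : ℂ} {c d : ℝ} (hc : 0 < c) (hcs : c ≤ s.re) (hd : 0 ≤ d) :
    ‖exp (-s * d) / s‖ ≤ Real.exp (-c * d) / c := by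
  rw [norm_div, norm_exp]
  gcongr
  · simp only [neg_mul, neg_re, mul_re, ofReal_re, ofReal_im, mul_zero, sub_zero]
    nlinarith
  · exact hcs.trans (re_le_norm s)

end Complex

/-- For `k ∈ ℂ`, `d > 0`, and a nonzero real `λ` with `|λ| ≥ 2|k|`, the Sommerfeld
integrand satisfies
`|e^{-√(λ²-k²) d} / √(λ²-k²)| ≤ (2/(√3 |λ|)) e^{-(√3/2)|λ| d}`,
where `√` is the principal branch of the complex square root. -/
theorem sommerfeld_integrand_decay_bound
    (k : ℂ) (d : ℝ) (hd : 0 < d) (lam : ℝ) (hlam : lam ≠ 0) (h : 2 * ‖k‖ ≤ |lam|) :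
    ‖Complex.exp (-(((lam : ℂ) ^ 2 - k ^ 2) ^ (1 / 2 : ℂ)) * (d : ℂ))
        / (((lam : ℂ) ^ 2 - k ^ 2) ^ (1 / 2 : ℂ))‖
      ≤ 2 / (Real.sqrt 3 * |lam|) * Real.exp (-(Real.sqrt 3 / 2) * |lam| * d) := by
  set c := √3 / 2 * |lam| with hc_def
  have hc : 0 < c := by positivity
  have hc_sq : c ^ 2 ≤ ((lam : ℂ) ^ 2 - k ^ 2).re := by
    have hw := sq_sub_norm_sq_le_re_sq_sub_sq lam k
    have hk : 4 * ‖k‖ ^ 2 ≤ lam ^ 2 := by nlinarith [sq_abs lam, norm_nonneg k]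
    rw [hc_def, mul_pow, div_pow, Real.sq_sqrt zero_le_three, sq_abs]
    linarith
  have hcs : c ≤ (((lam : ℂ) ^ 2 - k ^ 2) ^ (1 / 2 : ℂ)).re := by
    rw [one_div]
    exact (Real.le_sqrt_of_sq_le hc_sq).trans (sqrt_re_le_re_cpow_inv_two_s11 _)
  calc _ ≤ Real.exp (-c * d) / c := norm_exp_neg_mul_div_le hc hcs hd.le
    _ = _ := by
      rw [hc_def]
      field_simp
end
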